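/- Let X be the number of rainbow perfect matchings of K^{(n)}_{n,k}. Then for every ε > 0, P(|X - (n!)^k/n^n| > ε·(n!)^k/n^n) → 0 as n → ∞; in particular with high probability X = (1+o(1))·(n!)^k/n^n. -/

import Mathlib

/-!
There are `(n!)^(k-1)` perfect matchings and each is rainbow for a proportion `n!/n^n` of the
colourings, so the mean of `X` is `μ = (n!)^k/n^n`. Two perfect matchings sharing `t` edges are
simultaneously rainbow for a proportion at most `n!(n-t)!/n^(2n-t)` of the colourings. Writing
`(n-t)! n^t = n! + ∑_{s<t} s n^s (n-s-1)!` and using that at most `(n!)^(k-1)/j!` perfect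
matchings share at least `j` edges with a given one (this is where `k ≥ 2` enters), the second
moment is at most `μ²(1 + e^(1+e)/n)`, and Chebyshev's inequality bounds the proportion of
colourings with `|X - μ| > εμ` by `e^(1+e)/(ε² n)`.
-/

open Filter

def IsPerfectMatching (n k : ℕ) (M : Finset (Fin k → Fin n)) : Prop :=
  ∀ (i : Fin k) (v : Fin n), ∃! e, e ∈ M ∧ e i = v

noncomputable def rainbowCount (n k : ℕ) (ι : (Fin k → Fin n) → Fin n) : ℕ :=
  Nat.card {M : Finset (Fin k → Fin n) //
    IsPerfectMatching n k M ∧ Set.InjOn ι (M : Set (Fin k → Fin n))}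

open Finset
open scoped Nat Classical

section Colorings

variable {α β : Type*} [Fintype α] [Fintype β]

theorem card_injOn (A : Finset α) :
    Nat.card {ι : α → β // Set.InjOn ι A} =
      (Fintype.card β).descFactorial #A * Fintype.card β ^ (Fintype.card α - #A) := by
  let e : {ι : α → β // Set.InjOn ι A} ≃ (A ↪ β) × ({a // a ∉ A} → β) :=
    (((Equiv.piEquivPiSubtypeProd (· ∈ A) fun _ => β).subtypeEquiv fun _ =>
      Set.injOn_iff_injective).trans Equiv.prodSubtypeFstEquivSubtypeProd).trans
      ((Equiv.subtypeInjectiveEquivEmbedding _ _).prodCongr (Equiv.refl _))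
  rw [Nat.card_congr e, Nat.card_prod, Nat.card_eq_fintype_card, Fintype.card_embedding_eq,
    Nat.card_fun, Nat.card_eq_fintype_card]
  simp [Fintype.card_subtype_compl]

theorem card_injOn_injOn_le [DecidableEq α] {A B : Finset α} (hA : #A = Fintype.card β) :
    Nat.card {ι : α → β // Set.InjOn ι A ∧ Set.InjOn ι B} ≤
      (Fintype.card β)! * (#(A \ B)).descFactorial #(B \ A) *
        Fintype.card β ^ (Fintype.card α - #(A ∪ B)) := by
  -- `ι` is a bijection from `A` onto the colours, so on `B \ A` it is encoded by an injection
  -- `B \ A → A \ B` of edges of the same colour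
  have hsurj (ι : {ι : α → β // Set.InjOn ι A ∧ Set.InjOn ι B}) (b : ↥(B \ A)) :
      ∃ a : ↥(A \ B), ι.1 a = ι.1 b := by
    obtain ⟨a, ha, hab⟩ := surjOn_of_injOn_of_card_le (t := univ) ι.1
      (fun _ _ => mem_univ _) ι.2.1 (by simp [hA]) (mem_univ (ι.1 b))
    have hb := mem_sdiff.1 b.2
    refine ⟨⟨a, mem_sdiff.2 ⟨ha, fun haB => hb.2 ?_⟩⟩, hab⟩
    rwa [ι.2.2 haB hb.1 hab] at ha
  choose twin htwin using hsurj
  let F (ι : {ι : α → β // Set.InjOn ι A ∧ Set.InjOn ι B}) :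
      (A ↪ β) × ((↥(B \ A)) ↪ ↥(A \ B)) × ({a // a ∉ A ∪ B} → β) :=
    (⟨fun a => ι.1 a, fun a a' h => Subtype.ext (ι.2.1 a.2 a'.2 h)⟩,
      ⟨twin ι, fun b b' h => Subtype.ext <| ι.2.2 (mem_sdiff.1 b.2).1 (mem_sdiff.1 b'.2).1 <| by
        rw [← htwin, ← htwin, h]⟩,
      fun a => ι.1 a)
  have hF : Function.Injective F := by
    intro ι ι' h
    simp only [F, Prod.mk.injEq] at h
    obtain ⟨hA', hBA, hrest⟩ := h
    ext x
    by_cases hxA : x ∈ A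
    · exact DFunLike.congr_fun hA' ⟨x, hxA⟩
    by_cases hxB : x ∈ B
    · have hx : x ∈ B \ A := mem_sdiff.2 ⟨hxB, hxA⟩
      have htwin_eq : twin ι ⟨x, hx⟩ = twin ι' ⟨x, hx⟩ := DFunLike.congr_fun hBA _
      rw [← htwin ι ⟨x, hx⟩, ← htwin ι' ⟨x, hx⟩, htwin_eq]
      exact DFunLike.congr_fun hA' ⟨_, (mem_sdiff.1 (twin ι' ⟨x, hx⟩).2).1⟩
    · exact congrFun hrest ⟨x, by simp [hxA, hxB]⟩
  refine (Nat.card_le_card_of_injective F hF).trans_eq ?_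
  simp only [Nat.card_eq_fintype_card, Fintype.card_prod, Fintype.card_embedding_eq,
    Fintype.card_fun, Fintype.card_subtype_compl, Fintype.card_coe, hA, Nat.descFactorial_self,
    mul_assoc]

end Colorings

theorem card_perm_apply_eq_le {α ι : Type*} [Fintype α] [DecidableEq α] (S : Finset ι)
    (u w : ι → α) :
    Nat.card {σ : Equiv.Perm α // ∀ e ∈ S, σ (u e) = w e} ≤
      (Fintype.card α - #(S.image u))! := by
  rcases isEmpty_or_nonempty {σ : Equiv.Perm α // ∀ e ∈ S, σ (u e) = w e} with
    h | ⟨⟨τ, hτ⟩⟩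
  · simp
  -- left translation by `τ⁻¹` lands in the pointwise stabiliser of `S.image u`
  let F (σ : {σ : Equiv.Perm α // ∀ e ∈ S, σ (u e) = w e}) :
      {π : Equiv.Perm α // ∀ a, ¬a ∉ S.image u → π a = a} :=
    ⟨τ⁻¹ * σ.1, fun a ha => by
      obtain ⟨e, he, rfl⟩ := mem_image.1 (not_not.1 ha)
      rw [Equiv.Perm.mul_apply, σ.2 e he, ← hτ e he]
      exact τ.symm_apply_apply (u e)⟩
  have hF : Function.Injective F := fun σ σ' h =>
    Subtype.ext (mul_left_cancel (congrArg Subtype.val h))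
  refine (Nat.card_le_card_of_injective F hF).trans_eq ?_
  rw [← Nat.card_congr (Equiv.Perm.subtypeEquivSubtypePerm _), Nat.card_eq_fintype_card,
    Fintype.card_perm, Fintype.card_subtype_compl, Fintype.card_coe]

theorem card_filter_lt_abs_sub_mul_sq_le {ι : Type*} (s : Finset ι) (f : ι → ℝ) {m : ℝ}
    (hm : ∑ x ∈ s, f x = #s * m) {c : ℝ} (hc : 0 ≤ c) :
    #{x ∈ s | c < |f x - m|} * c ^ 2 ≤ ∑ x ∈ s, f x ^ 2 - #s * m ^ 2 := by
  calc (#{x ∈ s | c < |f x - m|} : ℝ) * c ^ 2 = ∑ x ∈ s with c < |f x - m|, c ^ 2 := by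
        rw [sum_const, nsmul_eq_mul]
    _ ≤ ∑ x ∈ s with c < |f x - m|, (f x - m) ^ 2 := sum_le_sum fun x hx => by
        rw [← sq_abs (f x - m)]
        exact pow_le_pow_left₀ hc (mem_filter.1 hx).2.le 2
    _ ≤ ∑ x ∈ s, (f x - m) ^ 2 :=
        sum_le_sum_of_subset_of_nonneg (filter_subset _ _) fun _ _ _ => sq_nonneg _
    _ = ∑ x ∈ s, f x ^ 2 - #s * m ^ 2 := by
        simp_rw [sub_sq, sum_add_distrib, sum_sub_distrib, ← sum_mul, ← mul_sum, hm, sum_const,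
          nsmul_eq_mul]
        ring

theorem factorial_sub_mul_pow_eq {n t : ℕ} (ht : t ≤ n) :
    (n - t)! * n ^ t = n ! + ∑ s ∈ range t, s * n ^ s * (n - s - 1)! := by
  induction t with
  | zero => simp
  | succ t ih =>
    obtain ⟨m, hm⟩ : ∃ m, n - t = m + 1 := ⟨n - t - 1, by omega⟩
    rw [sum_range_succ, ← add_assoc, ← ih (by omega), show n - (t + 1) = m by omega,
      show n - t - 1 = m by omega, hm, Nat.factorial_succ]
    calc m ! * n ^ (t + 1) = m ! * n ^ t * (n - t + t) := by
          rw [Nat.sub_add_cancel (by omega), pow_succ, mul_assoc]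
      _ = _ := by rw [hm]; ring

theorem pow_mul_factorial_le_pow_mul_descFactorial {n j : ℕ} (h : j ≤ n) :
    n ^ j * j ! ≤ j ^ j * n.descFactorial j := by
  rw [← Nat.descFactorial_self, Nat.descFactorial_eq_prod_range, Nat.descFactorial_eq_prod_range,
    ← card_range j, ← prod_const, ← prod_const, card_range, ← prod_mul_distrib,
    ← prod_mul_distrib]
  refine prod_le_prod' fun i hi => ?_
  obtain ⟨a, rfl⟩ := Nat.exists_eq_add_of_le (mem_range.1 hi).le
  obtain ⟨b, rfl⟩ := Nat.exists_eq_add_of_le h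
  rw [show i + a + b - i = a + b by omega, Nat.add_sub_cancel_left]
  nlinarith [Nat.zero_le (i * b)]

theorem pow_mul_factorial_sub_le_factorial_mul_exp {n j : ℕ} (h : j ≤ n) :
    (n : ℝ) ^ j * (n - j)! ≤ n ! * Real.exp j := by
  have hcomb : n ^ j * j ! * (n - j)! ≤ j ^ j * n ! :=
    calc n ^ j * j ! * (n - j)! ≤ j ^ j * n.descFactorial j * (n - j)! :=
          Nat.mul_le_mul_right _ (pow_mul_factorial_le_pow_mul_descFactorial h)
      _ = j ^ j * n ! := by rw [mul_assoc, mul_comm _ (n - j)!, Nat.factorial_mul_descFactorial h]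
  have hj : (0 : ℝ) < j ! := by positivity
  have hexp : (j : ℝ) ^ j ≤ Real.exp j * j ! :=
    (div_le_iff₀ hj).1 (Real.pow_div_factorial_le_exp _ (Nat.cast_nonneg j) j)
  refine le_of_mul_le_mul_right ?_ hj
  calc (n : ℝ) ^ j * (n - j)! * j ! = ((n ^ j * j ! * (n - j)! : ℕ) : ℝ) := by push_cast; ring
    _ ≤ ((j ^ j * n ! : ℕ) : ℝ) := by exact_mod_cast hcomb
    _ ≤ n ! * (Real.exp j * j !) := by push_cast; rw [mul_comm]; gcongr
    _ = n ! * Real.exp j * j ! := by ring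

theorem sum_range_mul_pow_mul_factorial_div_le {n : ℕ} (hn : 0 < n) :
    ∑ s ∈ range n, (s * n ^ s * (n - s - 1)! : ℝ) / (s + 1)! ≤
      n ! * Real.exp (1 + Real.exp 1) / n := by
  have hterm (s : ℕ) (hs : s < n) : (s * n ^ s * (n - s - 1)! : ℝ) / (s + 1)! ≤
      n ! * Real.exp 1 / n * (Real.exp 1 ^ s / s !) := by
    have key := pow_mul_factorial_sub_le_factorial_mul_exp (n := n) (j := s + 1) hs
    rw [← Nat.sub_sub, ← Real.exp_one_pow] at key
    rw [Nat.factorial_succ, Nat.cast_mul, div_mul_div_comm,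
      div_le_div_iff₀ (by positivity) (by positivity)]
    calc (s * n ^ s * (n - s - 1)! : ℝ) * (n * s !)
        = (s * s !) * (n ^ (s + 1) * (n - s - 1)!) := by ring
      _ ≤ ((s + 1 : ℕ) * s !) * (n ! * Real.exp 1 ^ (s + 1)) := by
        gcongr
        exact_mod_cast s.le_succ
      _ = _ := by ring
  calc ∑ s ∈ range n, (s * n ^ s * (n - s - 1)! : ℝ) / (s + 1)!
      ≤ ∑ s ∈ range n, n ! * Real.exp 1 / n * (Real.exp 1 ^ s / s !) :=
        sum_le_sum fun s hs => hterm s (mem_range.1 hs)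
    _ ≤ n ! * Real.exp 1 / n * Real.exp (Real.exp 1) := by
        rw [← mul_sum]
        gcongr
        exact Real.sum_le_exp_of_nonneg (Real.exp_pos 1).le n
    _ = n ! * Real.exp (1 + Real.exp 1) / n := by rw [Real.exp_add]; ring

variable {n k : ℕ}

namespace IsPerfectMatching

variable {M : Finset (Fin k → Fin n)}

theorem injOn_eval (hM : IsPerfectMatching n k M) (i : Fin k) :
    Set.InjOn (fun e => e i) (M : Set (Fin k → Fin n)) := fun _ he _ he' h =>
  (hM i _).unique ⟨he, rfl⟩ ⟨he', h.symm⟩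

theorem card_eq [NeZero k] (hM : IsPerfectMatching n k M) : #M = n := by
  have himage : M.image (fun e => e 0) = univ :=
    eq_univ_of_forall fun v => mem_image.2 (hM 0 v).exists
  simpa [card_image_of_injOn (hM.injOn_eval 0)] using congrArg card himage

end IsPerfectMatching

noncomputable def perfectMatchings (n k : ℕ) : Finset (Finset (Fin k → Fin n)) :=
  {M | IsPerfectMatching n k M}

def ofPerms (p : Fin k → Equiv.Perm (Fin n)) : Finset (Fin k → Fin n) :=
  univ.image fun v i => p i v

theorem isPerfectMatching_ofPerms (p : Fin k → Equiv.Perm (Fin n)) :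
    IsPerfectMatching n k (ofPerms p) := by
  intro i v
  refine ⟨fun j => p j ((p i).symm v), ⟨mem_image_of_mem _ (mem_univ _), by simp⟩, ?_⟩
  rintro _ ⟨he, rfl⟩
  obtain ⟨w, -, rfl⟩ := mem_image.1 he
  simp

section

variable [NeZero k]

theorem mem_ofPerms {p : Fin k → Equiv.Perm (Fin n)} (hp : p 0 = 1) {e : Fin k → Fin n} :
    e ∈ ofPerms p ↔ ∀ i, p i (e 0) = e i := by
  constructor
  · rintro he i
    obtain ⟨v, -, rfl⟩ := mem_image.1 he
    simp [hp]
  · exact fun h => mem_image.2 ⟨e 0, mem_univ _, funext h⟩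

theorem ofPerms_injOn :
    Set.InjOn (ofPerms (n := n) (k := k)) {p | p 0 = 1} := by
  intro p (hp : p 0 = 1) q (hq : q 0 = 1) h
  funext i
  refine Equiv.ext fun v => ?_
  have hv : (fun j => p j v) ∈ ofPerms q := h ▸ mem_image_of_mem _ (mem_univ v)
  simpa [hp] using ((mem_ofPerms hq).1 hv i).symm

theorem IsPerfectMatching.exists_ofPerms_eq {M : Finset (Fin k → Fin n)}
    (hM : IsPerfectMatching n k M) : ∃ p, p 0 = 1 ∧ ofPerms p = M := by
  choose edge hedge using fun v : Fin n => (hM 0 v).exists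
  have hedge_eq {e} (he : e ∈ M) : edge (e 0) = e :=
    hM.injOn_eval 0 (hedge _).1 he (hedge _).2
  have hbij (i : Fin k) : Function.Bijective fun v => edge v i := by
    refine Finite.injective_iff_bijective.1 fun v v' h => ?_
    rw [← (hedge v).2, ← (hedge v').2, hM.injOn_eval i (hedge v).1 (hedge v').1 h]
  let p i := Equiv.ofBijective _ (hbij i)
  have hp : p 0 = 1 := Equiv.ext fun v => (hedge v).2
  refine ⟨p, hp, ?_⟩
  ext e
  rw [mem_ofPerms hp]
  refine ⟨fun h => ?_, fun he i => congrFun (hedge_eq he) i⟩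
  rw [← funext h]
  exact (hedge _).1

theorem perfectMatchings_eq_image :
    perfectMatchings n k =
      ({p | p 0 = 1} : Finset (Fin k → Equiv.Perm (Fin n))).image ofPerms := by
  ext M
  simp only [perfectMatchings, mem_filter, mem_univ, true_and, mem_image]
  refine ⟨IsPerfectMatching.exists_ofPerms_eq, ?_⟩
  rintro ⟨p, -, rfl⟩
  exact isPerfectMatching_ofPerms p

theorem card_perfectMatchings : #(perfectMatchings n k) = n ! ^ (k - 1) := by
  let e : {p : Fin k → Equiv.Perm (Fin n) // p 0 = 1} ≃
      {σ : Equiv.Perm (Fin n) // σ = 1} × ({i : Fin k // i ≠ 0} → Equiv.Perm (Fin n)) :=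
    ((Equiv.piSplitAt (0 : Fin k) fun _ => Equiv.Perm (Fin n)).subtypeEquiv
      (q := fun x => x.1 = 1) fun _ => Iff.rfl).trans
      (Equiv.prodSubtypeFstEquivSubtypeProd (p := fun σ => σ = 1))
  rw [perfectMatchings_eq_image, card_image_of_injOn (by simpa using ofPerms_injOn),
    ← Fintype.card_subtype, ← Nat.card_eq_fintype_card, Nat.card_congr e]
  simp [Nat.card_eq_fintype_card, Fintype.card_subtype_compl, Fintype.card_perm]

theorem card_perfectMatchings_superset_le {M S : Finset (Fin k → Fin n)}
    (hM : IsPerfectMatching n k M) (hS : S ⊆ M) :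
    #{M' ∈ perfectMatchings n k | S ⊆ M'} ≤ (n - #S)! ^ (k - 1) := by
  rw [perfectMatchings_eq_image, filter_image]
  refine card_image_le.trans ?_
  rw [filter_filter, ← Fintype.card_subtype, ← Nat.card_eq_fintype_card]
  let F (p : {p : Fin k → Equiv.Perm (Fin n) // p 0 = 1 ∧ S ⊆ ofPerms p})
      (i : {i : Fin k // i ≠ 0}) : {σ : Equiv.Perm (Fin n) // ∀ e ∈ S, σ (e 0) = e i} :=
    ⟨p.1 i, fun e he => (mem_ofPerms p.2.1).1 (p.2.2 he) i⟩
  have hF : Function.Injective F := by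
    rintro ⟨p, hp, hSp⟩ ⟨q, hq, hSq⟩ h
    refine Subtype.ext (funext fun i => ?_)
    by_cases hi : i = 0
    · rw [hi]
      exact hp.trans hq.symm
    · exact congrArg Subtype.val (congrFun h ⟨i, hi⟩)
  refine (Nat.card_le_card_of_injective F hF).trans ?_
  have hS0 : #(S.image fun e => e 0) = #S :=
    card_image_of_injOn ((hM.injOn_eval 0).mono (coe_subset.2 hS))
  rw [Nat.card_pi]
  calc ∏ i : {i : Fin k // i ≠ 0},
        Nat.card {σ : Equiv.Perm (Fin n) // ∀ e ∈ S, σ (e 0) = e i}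
      ≤ ∏ _i : {i : Fin k // i ≠ 0}, (n - #S)! := prod_le_prod' fun i _ =>
        (card_perm_apply_eq_le S _ _).trans_eq (by rw [Fintype.card_fin, hS0])
    _ = (n - #S)! ^ (k - 1) := by simp [Fintype.card_subtype_compl]

end

theorem IsPerfectMatching.card_perfectMatchings_sharing_mul_factorial_le (hk : 2 ≤ k)
    {M : Finset (Fin k → Fin n)} (hM : IsPerfectMatching n k M) (j : ℕ) :
    #{M' ∈ perfectMatchings n k | j ≤ #(M ∩ M')} * j ! ≤ n ! ^ (k - 1) := by
  have : NeZero k := ⟨by omega⟩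
  have hsub : {M' ∈ perfectMatchings n k | j ≤ #(M ∩ M')} ⊆
      (M.powersetCard j).biUnion fun S => {M' ∈ perfectMatchings n k | S ⊆ M'} := by
    intro M' hM'
    rw [mem_filter] at hM'
    obtain ⟨S, hS, hSj⟩ := exists_subset_card_eq hM'.2
    simp only [mem_biUnion, mem_powersetCard, mem_filter]
    exact ⟨S, ⟨hS.trans inter_subset_left, hSj⟩, hM'.1, hS.trans inter_subset_right⟩
  calc #{M' ∈ perfectMatchings n k | j ≤ #(M ∩ M')} * j !
      ≤ (∑ S ∈ M.powersetCard j, #{M' ∈ perfectMatchings n k | S ⊆ M'}) * j ! := by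
        gcongr
        exact (card_le_card hsub).trans card_biUnion_le
    _ ≤ (∑ _S ∈ M.powersetCard j, (n - j)! ^ (k - 1)) * j ! := by
        gcongr with S hS
        obtain ⟨hSM, hSj⟩ := mem_powersetCard.1 hS
        exact hSj ▸ card_perfectMatchings_superset_le hM hSM
    _ = n.choose j * j ! * (n - j)! * (n - j)! ^ (k - 2) := by
        rw [sum_const, card_powersetCard, hM.card_eq, smul_eq_mul,
          show k - 1 = k - 2 + 1 by omega, pow_succ]
        ring
    _ ≤ n ! * n ! ^ (k - 2) := by
        rcases le_or_gt j n with hj | hj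
        · rw [Nat.choose_mul_factorial_mul_factorial hj]
          gcongr
          exact Nat.sub_le n j
        · simp [Nat.choose_eq_zero_of_lt hj]
    _ = n ! ^ (k - 1) := by rw [← pow_succ', show k - 2 + 1 = k - 1 by omega]

noncomputable def rainbowPerfectMatchings (n k : ℕ) (ι : (Fin k → Fin n) → Fin n) :
    Finset (Finset (Fin k → Fin n)) :=
  (perfectMatchings n k).filter fun M : Finset (Fin k → Fin n) => Set.InjOn ι M

theorem rainbowCount_eq_card (ι : (Fin k → Fin n) → Fin n) :
    rainbowCount n k ι = #(rainbowPerfectMatchings n k ι) := by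
  rw [rainbowCount, Nat.card_eq_fintype_card, Fintype.card_subtype, rainbowPerfectMatchings,
    perfectMatchings, filter_filter]

section

variable [NeZero k]

theorem sum_rainbowCount : ∑ ι, rainbowCount n k ι = n ! ^ k * n ^ (n ^ k - n) := by
  calc ∑ ι, rainbowCount n k ι
      = ∑ M ∈ perfectMatchings n k,
          #{ι : (Fin k → Fin n) → Fin n | Set.InjOn ι (M : Set (Fin k → Fin n))} := by
        simp_rw [rainbowCount_eq_card]
        exact sum_card_bipartiteAbove_eq_sum_card_bipartiteBelow _
    _ = ∑ _M ∈ perfectMatchings n k, n ! * n ^ (n ^ k - n) := by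
        refine sum_congr rfl fun M hM => ?_
        rw [← Fintype.card_subtype, ← Nat.card_eq_fintype_card, card_injOn,
          (mem_filter.1 hM).2.card_eq]
        simp [Nat.descFactorial_self]
    _ = n ! ^ k * n ^ (n ^ k - n) := by
        rw [sum_const, card_perfectMatchings, smul_eq_mul, ← mul_assoc, ← pow_succ,
          Nat.sub_add_cancel NeZero.one_le]

theorem IsPerfectMatching.card_injOn_injOn_mul_le {M M' : Finset (Fin k → Fin n)}
    (hM : IsPerfectMatching n k M) (hM' : IsPerfectMatching n k M') :
    Nat.card {ι : (Fin k → Fin n) → Fin n //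
        Set.InjOn ι (M : Set (Fin k → Fin n)) ∧ Set.InjOn ι (M' : Set (Fin k → Fin n))} *
      n ^ (2 * n) ≤ n ^ (n ^ k) * n ! * ((n - #(M ∩ M'))! * n ^ #(M ∩ M')) := by
  have hcount := card_injOn_injOn_le (β := Fin n) (B := M')
    (hM.card_eq.trans (Fintype.card_fin n).symm)
  have hunion : #(M ∪ M') + #(M ∩ M') = 2 * n := by
    rw [card_union_add_card_inter, hM.card_eq, hM'.card_eq, two_mul]
  have hsdiff : #(M \ M') = n - #(M ∩ M') := by
    rw [card_sdiff, inter_comm, hM.card_eq]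
  have hsdiff' : #(M' \ M) = n - #(M ∩ M') := by
    rw [card_sdiff, hM'.card_eq]
  have hle : #(M ∪ M') ≤ n ^ k := by simpa using card_le_univ (M ∪ M')
  simp only [Fintype.card_fin, Fintype.card_pi, prod_const, card_univ, hsdiff, hsdiff',
    Nat.descFactorial_self] at hcount
  calc _ ≤ n ! * (n - #(M ∩ M'))! * n ^ (n ^ k - #(M ∪ M')) * n ^ (2 * n) := by gcongr
    _ = n ^ (n ^ k - #(M ∪ M')) * n ^ #(M ∪ M') * n ! *
          ((n - #(M ∩ M'))! * n ^ #(M ∩ M')) := by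
        rw [← hunion, pow_add]
        ring
    _ = _ := by rw [pow_sub_mul_pow n hle]

theorem sum_rainbowCount_sq_mul_le :
    (∑ ι, rainbowCount n k ι ^ 2) * n ^ (2 * n) ≤
      n ^ (n ^ k) * n ! * ∑ M ∈ perfectMatchings n k, ∑ M' ∈ perfectMatchings n k,
        (n - #(M ∩ M'))! * n ^ #(M ∩ M') := by
  have hsq (ι : (Fin k → Fin n) → Fin n) : rainbowCount n k ι ^ 2 =
      #((perfectMatchings n k ×ˢ perfectMatchings n k).filter
        fun q => Set.InjOn ι (q.1 : Set (Fin k → Fin n)) ∧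
          Set.InjOn ι (q.2 : Set (Fin k → Fin n))) := by
    rw [rainbowCount_eq_card, sq, ← card_product]
    congr 1
    ext
    simp [rainbowPerfectMatchings, and_and_and_comm]
  calc (∑ ι, rainbowCount n k ι ^ 2) * n ^ (2 * n)
      = ∑ M ∈ perfectMatchings n k, ∑ M' ∈ perfectMatchings n k,
          Nat.card {ι : (Fin k → Fin n) → Fin n // Set.InjOn ι (M : Set (Fin k → Fin n)) ∧
            Set.InjOn ι (M' : Set (Fin k → Fin n))} * n ^ (2 * n) := by
        simp_rw [hsq, Nat.card_eq_fintype_card, Fintype.card_subtype, ← sum_mul, ← sum_product']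
        congr 1
        exact sum_card_bipartiteAbove_eq_sum_card_bipartiteBelow _
    _ ≤ ∑ M ∈ perfectMatchings n k, ∑ M' ∈ perfectMatchings n k,
          n ^ (n ^ k) * n ! * ((n - #(M ∩ M'))! * n ^ #(M ∩ M')) := by
        refine sum_le_sum fun M hM => sum_le_sum fun M' hM' => ?_
        exact (mem_filter.1 hM).2.card_injOn_injOn_mul_le (mem_filter.1 hM').2
    _ = _ := by simp_rw [mul_sum]

theorem sum_sum_factorial_sub_mul_pow_eq :
    ∑ M ∈ perfectMatchings n k, ∑ M' ∈ perfectMatchings n k,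
        (n - #(M ∩ M'))! * n ^ #(M ∩ M') =
      #(perfectMatchings n k) * #(perfectMatchings n k) * n ! +
        ∑ s ∈ range n, s * n ^ s * (n - s - 1)! *
          ∑ M ∈ perfectMatchings n k,
            #{M' ∈ perfectMatchings n k | s + 1 ≤ #(M ∩ M')} := by
  have htel {M} (hM : M ∈ perfectMatchings n k) (M' : Finset (Fin k → Fin n)) :
      (n - #(M ∩ M'))! * n ^ #(M ∩ M') =
        n ! + ∑ s ∈ range n, if s + 1 ≤ #(M ∩ M') then s * n ^ s * (n - s - 1)! else 0 := by
    have ht : #(M ∩ M') ≤ n :=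
      (card_le_card inter_subset_left).trans_eq (mem_filter.1 hM).2.card_eq
    rw [factorial_sub_mul_pow_eq ht, ← sum_filter]
    congr 2
    ext s
    simp only [mem_range, mem_filter]
    omega
  rw [sum_congr rfl fun M hM => sum_congr rfl fun M' _ => htel hM M']
  simp_rw [sum_add_distrib, sum_const, smul_eq_mul]
  rw [mul_assoc]
  congr 1
  simp_rw [mul_sum]
  rw [sum_comm (s := range n)]
  refine sum_congr rfl fun M _ => ?_
  rw [sum_comm]
  refine sum_congr rfl fun s _ => ?_
  rw [← sum_filter, sum_const, smul_eq_mul, mul_comm]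

end

theorem sum_sum_factorial_sub_mul_pow_le (hk : 2 ≤ k) (hn : 0 < n) :
    ((∑ M ∈ perfectMatchings n k, ∑ M' ∈ perfectMatchings n k,
        (n - #(M ∩ M'))! * n ^ #(M ∩ M') : ℕ) : ℝ) ≤
      n ! ^ (2 * k - 1) * (1 + Real.exp (1 + Real.exp 1) / n) := by
  have : NeZero k := ⟨by omega⟩
  set P := perfectMatchings n k
  have hcount (s : ℕ) :
      (∑ M ∈ P, #{M' ∈ P | s + 1 ≤ #(M ∩ M')} : ℝ) ≤ #P * #P / (s + 1)! := by
    rw [le_div_iff₀ (by positivity), sum_mul]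
    calc ∑ M ∈ P, (#{M' ∈ P | s + 1 ≤ #(M ∩ M')} : ℝ) * (s + 1)!
        ≤ ∑ _M ∈ P, (#P : ℝ) := sum_le_sum fun M hM => by
          exact_mod_cast ((mem_filter.1 hM).2.card_perfectMatchings_sharing_mul_factorial_le hk
            (s + 1)).trans_eq card_perfectMatchings.symm
      _ = #P * #P := by rw [sum_const, nsmul_eq_mul]
  rw [sum_sum_factorial_sub_mul_pow_eq]
  push_cast
  calc _ ≤ #P * #P * (n ! : ℝ) +
        ∑ s ∈ range n, (s * n ^ s * (n - s - 1)! * (#P * #P / (s + 1)!) : ℝ) := by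
        gcongr with s
        exact hcount s
    _ = #P * #P *
          ((n ! : ℝ) + ∑ s ∈ range n, (s * n ^ s * (n - s - 1)! : ℝ) / (s + 1)!) := by
        rw [mul_add, mul_sum]
        congr 1
        refine sum_congr rfl fun s _ => ?_
        ring
    _ ≤ #P * #P * ((n ! : ℝ) + n ! * Real.exp (1 + Real.exp 1) / n) := by
        gcongr
        exact sum_range_mul_pow_mul_factorial_div_le hn
    _ = n ! ^ (2 * k - 1) * (1 + Real.exp (1 + Real.exp 1) / n) := by
        rw [card_perfectMatchings, show 2 * k - 1 = k - 1 + (k - 1) + 1 by omega, pow_succ,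
          pow_add]
        push_cast
        ring

theorem sum_cast_rainbowCount [NeZero k] (hn : 0 < n) :
    ∑ ι, (rainbowCount n k ι : ℝ) = n ^ (n ^ k) * (n ! ^ k / n ^ n) := by
  rw [← Nat.cast_sum, sum_rainbowCount]
  push_cast
  rw [pow_sub₀ _ (by positivity) (Nat.le_self_pow (NeZero.ne k) n)]
  ring

theorem sum_sq_rainbowCount_le (hk : 2 ≤ k) (hn : 0 < n) :
    ∑ ι, (rainbowCount n k ι : ℝ) ^ 2 ≤
      n ^ (n ^ k) * (n ! ^ k / n ^ n) ^ 2 * (1 + Real.exp (1 + Real.exp 1) / n) := by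
  have : NeZero k := ⟨by omega⟩
  have hmul : (∑ ι, (rainbowCount n k ι : ℝ) ^ 2) * n ^ (2 * n) ≤
      n ^ (n ^ k) * n ! * (n ! ^ (2 * k - 1) * (1 + Real.exp (1 + Real.exp 1) / n)) := by
    calc (∑ ι, (rainbowCount n k ι : ℝ) ^ 2) * n ^ (2 * n)
        = (((∑ ι, rainbowCount n k ι ^ 2) * n ^ (2 * n) : ℕ) : ℝ) := by push_cast; rfl
      _ ≤ (n ^ (n ^ k) * n ! : ℝ) *
          ((∑ M ∈ perfectMatchings n k, ∑ M' ∈ perfectMatchings n k,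
            (n - #(M ∩ M'))! * n ^ #(M ∩ M') : ℕ) : ℝ) := by
          exact_mod_cast sum_rainbowCount_sq_mul_le
      _ ≤ _ := by
          gcongr
          exact sum_sum_factorial_sub_mul_pow_le hk hn
  have hfac : (n ! : ℝ) * n ! ^ (2 * k - 1) = (n ! ^ k) ^ 2 := by
    rw [← pow_succ', ← pow_mul, show 2 * k - 1 + 1 = k * 2 by omega]
  calc ∑ ι, (rainbowCount n k ι : ℝ) ^ 2
      ≤ n ^ (n ^ k) * n ! * (n ! ^ (2 * k - 1) * (1 + Real.exp (1 + Real.exp 1) / n)) /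
          n ^ (2 * n) := (le_div_iff₀ (by positivity)).2 hmul
    _ = _ := by
        rw [div_pow, ← hfac, ← pow_mul, mul_comm n 2]
        ring

theorem card_deviation_div_le (hk : 2 ≤ k) (hn : 0 < n) {ε : ℝ} (hε : 0 < ε) :
    (Nat.card {ι : (Fin k → Fin n) → Fin n //
        ε * ((Nat.factorial n : ℝ) ^ k / (n : ℝ) ^ n)
          < |(rainbowCount n k ι : ℝ) - (Nat.factorial n : ℝ) ^ k / (n : ℝ) ^ n|} : ℝ)
      / (n : ℝ) ^ (n ^ k) ≤ Real.exp (1 + Real.exp 1) / (ε ^ 2 * n) := by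
  have : NeZero k := ⟨by omega⟩
  set μ : ℝ := (n ! : ℝ) ^ k / n ^ n
  have hμ : 0 < μ := by positivity
  have hcard : (#(univ : Finset ((Fin k → Fin n) → Fin n)) : ℝ) = n ^ (n ^ k) := by simp
  have hcheb := card_filter_lt_abs_sub_mul_sq_le univ (fun ι => (rainbowCount n k ι : ℝ))
    (m := μ) (by rw [hcard, sum_cast_rainbowCount hn]) (c := ε * μ) (by positivity)
  rw [hcard] at hcheb
  have hsq := sum_sq_rainbowCount_le hk hn
  rw [Nat.card_eq_fintype_card, Fintype.card_subtype,
    div_le_div_iff₀ (by positivity) (by positivity)]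
  refine le_of_mul_le_mul_right ?_ (pow_pos hμ 2)
  calc _ = #{ι | ε * μ < |(rainbowCount n k ι : ℝ) - μ|} * (ε * μ) ^ 2 * n := by ring
    _ ≤ (∑ ι, (rainbowCount n k ι : ℝ) ^ 2 - n ^ (n ^ k) * μ ^ 2) * n := by gcongr
    _ ≤ (n ^ (n ^ k) * μ ^ 2 * (1 + Real.exp (1 + Real.exp 1) / n) - n ^ (n ^ k) * μ ^ 2) *
          n := by
        gcongr
    _ = _ := by field_simp; ring

/-- Let `X` be the number of rainbow perfect matchings of `K^{(n)}_{n,k}` (`k ≥ 2` fixed;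
each edge colored independently and uniformly from `n` colors, i.e. the coloring is uniform
among all `n^(n^k)` colorings). For every `ε > 0`,
`P(|X − (n!)^k/n^n| > ε·(n!)^k/n^n) → 0` as `n → ∞`; in particular w.h.p.
`X = (1+o(1))·(n!)^k/n^n`. -/
theorem rainbow_count_concentration (k : ℕ) (hk : 2 ≤ k) (ε : ℝ) (hε : 0 < ε) :
    Tendsto (fun n : ℕ =>
        (Nat.card {ι : (Fin k → Fin n) → Fin n //
            ε * ((Nat.factorial n : ℝ) ^ k / (n : ℝ) ^ n)
              < |(rainbowCount n k ι : ℝ) - (Nat.factorial n : ℝ) ^ k / (n : ℝ) ^ n|} : ℝ)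
          / (n : ℝ) ^ (n ^ k))
      atTop (nhds 0) := by
  refine squeeze_zero' (Eventually.of_forall fun n => by positivity)
    ((eventually_gt_atTop 0).mono fun n hn => card_deviation_div_le hk hn hε) ?_
  exact tendsto_const_nhds.div_atTop
    (tendsto_natCast_atTop_atTop.const_mul_atTop (by positivity))
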